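/- Fix λ, α > 0 with α ≥ 1, and let y > 0 satisfy υ(λy) ≤ α·y^α, where υ(t) = tφ(t)/(φ(t) − t²/2). Then for all real x: φ(λx) ≤ x²·φ(λy)/y² + ρ(y)·exp((max(x,0))^α)·𝟙[x > y], where ρ(y) = (φ(λy) − (λy)²/2)·exp(−y^α) and φ(t) = e^t − 1 − t. -/

import Mathlib

open Real

set_option maxHeartbeats 1000000

noncomputable def phiFn (t : ℝ) : ℝ := Real.exp t - 1 - t

noncomputable def upsilon (t : ℝ) : ℝ :=
  if t = 0 then 3 else t * phiFn t / (phiFn t - t ^ 2 / 2)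

noncomputable def rhoFn (l α y : ℝ) : ℝ :=
  (phiFn (l * y) - (l * y) ^ 2 / 2) * Real.exp (-(y ^ α))

noncomputable def psiF (t : ℝ) : ℝ := phiFn t - t ^ 2 / 2

lemma hasDerivAt_phiFn (t : ℝ) : HasDerivAt phiFn (Real.exp t - 1) t := by
  have h := ((Real.hasDerivAt_exp t).sub_const 1).sub (hasDerivAt_id t)
  exact h

lemma phi_nonneg (t : ℝ) : 0 ≤ phiFn t := by
  have := Real.add_one_le_exp t
  simp only [phiFn]; linarith

/-- helper: f 0 = 0 and f' ≥ 0 on [0,∞) implies f ≥ 0 on [0,∞) -/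
lemma nonneg_of_deriv (f f' : ℝ → ℝ) (hf : ∀ t, HasDerivAt f (f' t) t)
    (h0 : f 0 = 0) (hd : ∀ t, 0 ≤ t → 0 ≤ f' t) : ∀ t, 0 ≤ t → 0 ≤ f t := by
  intro t ht
  have hmono : MonotoneOn f (Set.Ici (0:ℝ)) := by
    apply monotoneOn_of_deriv_nonneg (convex_Ici 0)
    · exact fun x _ => (hf x).continuousAt.continuousWithinAt
    · exact fun x _ => (hf x).differentiableAt.differentiableWithinAt
    · intro x hx
      rw [interior_Ici] at hx
      rw [(hf x).deriv]
      exact hd x (le_of_lt hx)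
  have := hmono Set.self_mem_Ici ht ht
  linarith [h0 ▸ this]

lemma hasDerivAt_psiF (u : ℝ) : HasDerivAt psiF (phiFn u) u := by
  have h := (hasDerivAt_phiFn u).sub ((hasDerivAt_pow 2 u).div_const 2)
  have h2 : HasDerivAt psiF (Real.exp u - 1 - ↑2 * u ^ (2 - 1) / 2) u := h
  exact h2.congr_deriv (by norm_num [phiFn])

lemma hasDerivAt_const_mul_aux (c t : ℝ) : HasDerivAt (fun t : ℝ => c * t) c t := by
  simpa using (hasDerivAt_id t).const_mul c

lemma phi_le_half_sq {t : ℝ} (ht : t ≤ 0) : phiFn t ≤ t ^ 2 / 2 := by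
  have hmono : MonotoneOn psiF (Set.Iic (0:ℝ)) := by
    apply monotoneOn_of_deriv_nonneg (convex_Iic 0)
    · exact fun x _ => (hasDerivAt_psiF x).continuousAt.continuousWithinAt
    · exact fun x _ => (hasDerivAt_psiF x).differentiableAt.differentiableWithinAt
    · intro x _
      rw [(hasDerivAt_psiF x).deriv]
      exact phi_nonneg x
  have h := hmono (Set.mem_Iic.2 ht) (Set.self_mem_Iic) ht
  simp only [psiF, phiFn] at h ⊢
  norm_num at h
  linarith

lemma exp_smul_le {c : ℝ} (hc0 : 0 ≤ c) (hc1 : c ≤ 1) :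
    ∀ t, 0 ≤ t → Real.exp (c * t) - 1 ≤ c * (Real.exp t - 1) := by
  intro t ht
  have key := nonneg_of_deriv (fun t => c * (Real.exp t - 1) - (Real.exp (c * t) - 1))
    (fun t => c * Real.exp t - c * Real.exp (c * t))
    (fun t => by
      have h1 : HasDerivAt (fun t => Real.exp (c * t)) (Real.exp (c * t) * c) t :=
        (hasDerivAt_const_mul_aux c t).exp
      have h2 := (((Real.hasDerivAt_exp t).sub_const 1).const_mul c).sub (h1.sub_const 1)
      exact h2.congr_deriv (by ring))
    (by simp)
    (fun t ht => by
      have : Real.exp (c * t) ≤ Real.exp t :=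
        Real.exp_le_exp.2 (by nlinarith)
      nlinarith)
    t ht
  linarith

lemma phi_smul_le {c : ℝ} (hc0 : 0 ≤ c) (hc1 : c ≤ 1) :
    ∀ t, 0 ≤ t → phiFn (c * t) ≤ c ^ 2 * phiFn t := by
  intro t ht
  have key := nonneg_of_deriv (fun t => c ^ 2 * phiFn t - phiFn (c * t))
    (fun t => c ^ 2 * (Real.exp t - 1) - c * (Real.exp (c * t) - 1))
    (fun t => by
      have h1 : HasDerivAt (fun t => phiFn (c * t)) (c * (Real.exp (c * t) - 1)) t := by
        have := (hasDerivAt_phiFn (c * t)).comp t (hasDerivAt_const_mul_aux c t)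
        exact this.congr_deriv (by ring)
      exact (((hasDerivAt_phiFn t).const_mul (c ^ 2)).sub h1).congr_deriv (by ring))
    (by simp [phiFn])
    (fun t ht => by
      have := exp_smul_le hc0 hc1 t ht
      nlinarith)
    t ht
  linarith

lemma psi_smul_le {c : ℝ} (hc0 : 0 ≤ c) (hc1 : c ≤ 1) :
    ∀ t, 0 ≤ t → psiF (c * t) ≤ c ^ 3 * psiF t := by
  intro t ht
  have key := nonneg_of_deriv (fun t => c ^ 3 * psiF t - psiF (c * t))
    (fun t => c ^ 3 * phiFn t - c * phiFn (c * t))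
    (fun t => by
      have h1 : HasDerivAt (fun t => psiF (c * t)) (c * phiFn (c * t)) t := by
        have := (hasDerivAt_psiF (c * t)).comp t (hasDerivAt_const_mul_aux c t)
        exact this.congr_deriv (by ring)
      exact (((hasDerivAt_psiF t).const_mul (c ^ 3)).sub h1).congr_deriv (by ring))
    (by simp [psiF, phiFn])
    (fun t ht => by
      have := phi_smul_le hc0 hc1 t ht
      nlinarith)
    t ht
  linarith

lemma half_sq_le_phi {t : ℝ} (ht : 0 ≤ t) : t ^ 2 / 2 ≤ phiFn t := by
  have key := nonneg_of_deriv psiF phiFn hasDerivAt_psiF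
    (by simp [psiF, phiFn])
    (fun t _ => phi_nonneg t) t ht
  simp only [psiF] at key
  linarith

lemma cube_le_psi {t : ℝ} (ht : 0 ≤ t) : t ^ 3 / 6 ≤ psiF t := by
  have key := nonneg_of_deriv (fun t => psiF t - t ^ 3 / 6)
    (fun t => phiFn t - t ^ 2 / 2)
    (fun u => by
      have := (hasDerivAt_psiF u).sub ((hasDerivAt_pow 3 u).div_const 6)
      exact this.congr_deriv (by push_cast; ring))
    (by simp [psiF, phiFn])
    (fun t ht => by linarith [half_sq_le_phi ht])
    t ht
  linarith

theorem stmt_6 (l α y : ℝ) (hl : 0 < l) (hα : 1 ≤ α) (hy : 0 < y)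
    (hcond : upsilon (l * y) ≤ α * y ^ α) :
    ∀ x : ℝ,
      phiFn (l * x) ≤ x ^ 2 * phiFn (l * y) / y ^ 2 +
        rhoFn l α y * Real.exp ((max x 0) ^ α) * (if y < x then 1 else 0) := by
  have hs : 0 < l * y := mul_pos hl hy
  have hψs : 0 < psiF (l * y) := lt_of_lt_of_le (by positivity) (cube_le_psi hs.le)
  have hphi_y : (l * y) ^ 2 / 2 ≤ phiFn (l * y) := half_sq_le_phi hs.le
  have hcond' : (l * y) * phiFn (l * y) ≤ α * y ^ α * psiF (l * y) := by
    rw [upsilon, if_neg hs.ne'] at hcond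
    have heq : phiFn (l * y) - (l * y) ^ 2 / 2 = psiF (l * y) := rfl
    rw [heq, div_le_iff₀ hψs] at hcond
    linarith
  have hpsy : phiFn (l * y) = psiF (l * y) + (l * y) ^ 2 / 2 := by simp [psiF]
  have hly : l * y ≤ α * y ^ α := by nlinarith [sq_nonneg (l * y)]
  -- key derivative inequality
  have key : ∀ z, y ≤ z → l * phiFn (l * z) ≤ α * z ^ (α - 1) * psiF (l * z) := by
    intro z hz
    have hz0 : 0 < z := lt_of_lt_of_le hy hz
    have ht : 0 < l * z := mul_pos hl hz0
    have hst : l * y ≤ l * z := by nlinarith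
    have hψt : 0 < psiF (l * z) := lt_of_lt_of_le (by positivity) (cube_le_psi ht.le)
    have hpst : phiFn (l * z) = psiF (l * z) + (l * z) ^ 2 / 2 := by simp [psiF]
    have hc0 : 0 ≤ (l * y) / (l * z) := by positivity
    have hc1 : (l * y) / (l * z) ≤ 1 := by rw [div_le_one ht]; exact hst
    have h5 := psi_smul_le hc0 hc1 (l * z) ht.le
    rw [div_mul_cancel₀ _ ht.ne'] at h5
    have hmono : (l * z) ^ 3 * psiF (l * y) ≤ (l * y) ^ 3 * psiF (l * z) := by
      rw [div_pow] at h5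
      have h6 := mul_le_mul_of_nonneg_left h5 (le_of_lt (pow_pos ht 3))
      calc (l * z) ^ 3 * psiF (l * y)
          ≤ (l * z) ^ 3 * ((l * y) ^ 3 / (l * z) ^ 3 * psiF (l * z)) := h6
        _ = (l * y) ^ 3 * psiF (l * z) := by field_simp
    have hyα : 0 < y ^ α := Real.rpow_pos_of_pos hy α
    have hber : α * y ^ α + l * (z - y) ≤ α * z ^ α := by
      have hge : (-1:ℝ) ≤ (z - y) / y :=
        le_trans (by norm_num) (div_nonneg (by linarith) hy.le)
      have hb := one_add_mul_self_le_rpow_one_add hge hα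
      have h1u : 1 + (z - y) / y = z / y := by field_simp; ring
      rw [h1u, Real.div_rpow hz0.le hy.le] at hb
      have hb' := (le_div_iff₀ hyα).mp hb
      have hb'' := mul_le_mul_of_nonneg_right hb' hy.le
      have hlhs : (1 + α * ((z - y) / y)) * y ^ α * y
          = y ^ α * y + α * (z - y) * y ^ α := by field_simp
      rw [hlhs] at hb''
      -- multiply target by y and use hb''
      have hgoal : (α * y ^ α + l * (z - y)) * y ≤ (α * z ^ α) * y := by
        nlinarith [mul_le_mul_of_nonneg_left hb'' (by linarith : (0:ℝ) ≤ α),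
          mul_le_mul_of_nonneg_left hly (by linarith : (0:ℝ) ≤ z - y),
          mul_nonneg (by linarith : (0:ℝ) ≤ α - 1)
            (mul_nonneg (by linarith : (0:ℝ) ≤ α)
              (mul_nonneg (by linarith : (0:ℝ) ≤ z - y) hyα.le))]
      exact le_of_mul_le_mul_right hgoal hy
    -- main multiplied inequality
    have hA : (0:ℝ) ≤ α * y ^ α - l * y := by linarith
    have hcond'' : (l * y) ^ 3 / 2 ≤ (α * y ^ α - l * y) * psiF (l * y) := by
      have hc3 : l * y * (psiF (l * y) + (l * y) ^ 2 / 2) ≤ α * y ^ α * psiF (l * y) := by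
        rw [← hpsy]; exact hcond'
      nlinarith [hc3]
    have h6 : (l * z) ^ 3 / 2 * psiF (l * y)
        ≤ ((α * y ^ α - l * y) * psiF (l * z)) * psiF (l * y) := by
      nlinarith [mul_le_mul_of_nonneg_right hcond'' hψt.le, hmono]
    have h7 : (l * z) ^ 3 / 2 ≤ (α * y ^ α - l * y) * psiF (l * z) :=
      le_of_mul_le_mul_right h6 hψs
    have hmain : (l * z) * phiFn (l * z) ≤ α * z ^ α * psiF (l * z) := by
      have h8 : α * y ^ α - l * y + l * z ≤ α * z ^ α := by linarith
      nlinarith [mul_le_mul_of_nonneg_right h8 hψt.le, h7, hpst]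
    have hz_pow : z ^ (α - 1) * z = z ^ α := by
      have h := Real.rpow_add hz0 (α - 1) 1
      rw [Real.rpow_one] at h
      rw [← h]; norm_num
    have hgoal2 : (l * phiFn (l * z)) * z ≤ (α * z ^ (α - 1) * psiF (l * z)) * z := by
      calc (l * phiFn (l * z)) * z = (l * z) * phiFn (l * z) := by ring
        _ ≤ α * z ^ α * psiF (l * z) := hmain
        _ = (α * z ^ (α - 1) * psiF (l * z)) * z := by rw [← hz_pow]; ring
    exact le_of_mul_le_mul_right hgoal2 hz0
  -- antitone function F
  have hFderiv : ∀ z, 0 < z → HasDerivAt (fun z => psiF (l * z) * Real.exp (-(z ^ α)))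
      ((l * phiFn (l * z) - α * z ^ (α - 1) * psiF (l * z)) * Real.exp (-(z ^ α))) z := by
    intro z hz0
    have h1 : HasDerivAt (fun z => psiF (l * z)) (l * phiFn (l * z)) z := by
      have := (hasDerivAt_psiF (l * z)).comp z (hasDerivAt_const_mul_aux l z)
      exact this.congr_deriv (by ring)
    have h2 : HasDerivAt (fun z : ℝ => Real.exp (-(z ^ α)))
        (Real.exp (-(z ^ α)) * (-(α * z ^ (α - 1)))) z :=
      ((Real.hasDerivAt_rpow_const (Or.inl hz0.ne')).neg).exp
    exact (h1.mul h2).congr_deriv (by ring)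
  have hanti : AntitoneOn (fun z => psiF (l * z) * Real.exp (-(z ^ α))) (Set.Ici y) := by
    apply antitoneOn_of_deriv_nonpos (convex_Ici y)
    · exact fun z hz => (hFderiv z (lt_of_lt_of_le hy hz)).continuousAt.continuousWithinAt
    · intro z hz; rw [interior_Ici] at hz
      exact (hFderiv z (lt_trans hy hz)).differentiableAt.differentiableWithinAt
    · intro z hz; rw [interior_Ici] at hz
      rw [(hFderiv z (lt_trans hy hz)).deriv]
      have hk := key z (le_of_lt hz)
      have hneg : l * phiFn (l * z) - α * z ^ (α - 1) * psiF (l * z) ≤ 0 := by linarith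
      exact mul_nonpos_of_nonpos_of_nonneg hneg (Real.exp_nonneg _)
  -- conclusion
  intro x
  rcases le_or_gt x y with hxy | hyx
  · rw [if_neg (not_lt.2 hxy), mul_zero, add_zero]
    rcases le_or_gt x 0 with hx0 | hx0
    · have hlx : l * x ≤ 0 := by nlinarith
      have h1 : phiFn (l * x) ≤ (l * x) ^ 2 / 2 := phi_le_half_sq hlx
      rw [le_div_iff₀ (by positivity : (0:ℝ) < y ^ 2)]
      nlinarith [mul_le_mul_of_nonneg_right h1 (sq_nonneg y),
        mul_le_mul_of_nonneg_left hphi_y (sq_nonneg x)]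
    · have hc0 : 0 ≤ x / y := by positivity
      have hc1 : x / y ≤ 1 := by rw [div_le_one hy]; exact hxy
      have h1 := phi_smul_le hc0 hc1 (l * y) hs.le
      have harg : x / y * (l * y) = l * x := by field_simp
      rw [harg, div_pow] at h1
      calc phiFn (l * x) ≤ x ^ 2 / y ^ 2 * phiFn (l * y) := h1
        _ = x ^ 2 * phiFn (l * y) / y ^ 2 := by ring
  · rw [if_pos hyx, mul_one]
    have hx0 : 0 < x := lt_trans hy hyx
    rw [max_eq_left hx0.le]
    have hFle := hanti Set.self_mem_Ici (Set.mem_Ici.2 hyx.le) hyx.le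
    have hψx : psiF (l * x) ≤ psiF (l * y) * Real.exp (-(y ^ α)) * Real.exp (x ^ α) := by
      have hmul := mul_le_mul_of_nonneg_right hFle (Real.exp_nonneg (x ^ α))
      dsimp only at hmul
      rw [mul_assoc, ← Real.exp_add, neg_add_cancel, Real.exp_zero, mul_one] at hmul
      exact hmul
    have hrho : rhoFn l α y = psiF (l * y) * Real.exp (-(y ^ α)) := rfl
    have h2 : (l * x) ^ 2 / 2 ≤ x ^ 2 * phiFn (l * y) / y ^ 2 := by
      rw [le_div_iff₀ (by positivity : (0:ℝ) < y ^ 2)]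
      nlinarith [mul_le_mul_of_nonneg_left hphi_y (sq_nonneg x)]
    have hexp : phiFn (l * x) = psiF (l * x) + (l * x) ^ 2 / 2 := by simp [psiF]
    rw [hrho]
    linarith
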